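/- (Jacobi triple product, half-integer case) For |q| < 1 and z ≠ 0: ∑_{m ∈ ℤ+1/2} q^{m²/2} z^m = (z^{1/2} + z^{-1/2}) q^{1/8} ∏_{m>0} (1 - q^m)(1 + z q^m)(1 + z^{-1} q^m). -/

import Mathlib

/-!
The finite form
`∏_{j<N} (1 + z q^{j+1}) (1 + z⁻¹ q^j) = ∑_{|k| ≤ N} [2N, N+k]_q q^{k(k+1)/2} z^k`
follows by induction on `N` from a three-term recursion for its coefficients. After
multiplying by `(q;q)_N`, the coefficients `(q;q)_N [2N, N+k]_q` are uniformly bounded and tend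
to `1`, so dominated convergence gives
`∑_k q^{k(k+1)/2} z^k = (1 + z⁻¹) ∏_{n ≥ 1} (1 - qⁿ)(1 + z qⁿ)(1 + z⁻¹ qⁿ)`.
With `q = e^{2πiτ}`, `z = e^{2πiσ}` the half-integer series is this one times `q^{1/8} z^{1/2}`.
-/

open Filter Finset Topology Complex
open scoped Real

section Algebra

variable {K : Type*} [Field K] {q z : K}

def qPochhammer (q : K) (n : ℕ) : K := ∏ j ∈ range n, (1 - q ^ (j + 1))

-- Extended by zero to negative indices, so that `qPochhammerInv_sub_one` holds for every `j`
-- and `qBinomial q n m` vanishes unless `0 ≤ m ≤ n`.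
def qPochhammerInv (q : K) (j : ℤ) : K := if 0 ≤ j then (qPochhammer q j.toNat)⁻¹ else 0

def qBinomial (q : K) (n : ℕ) (m : ℤ) : K :=
  qPochhammer q n * qPochhammerInv q m * qPochhammerInv q (n - m)

def triangular (k : ℤ) : ℤ := k * (k + 1) / 2

def tripleProductCoeff (q : K) (N : ℕ) (k : ℤ) : K :=
  qBinomial q (2 * N) (N + k) * q ^ triangular k

lemma two_mul_triangular (k : ℤ) : 2 * triangular k = k * (k + 1) := by
  rw [triangular, mul_comm]
  exact Int.ediv_mul_cancel (Int.even_mul_succ_self k).two_dvd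

lemma triangular_add_one (k : ℤ) : triangular (k + 1) = triangular k + (k + 1) := by
  apply mul_left_cancel₀ (two_ne_zero : (2 : ℤ) ≠ 0)
  linear_combination two_mul_triangular (k + 1) - two_mul_triangular k

lemma triangular_sub_one (k : ℤ) : triangular (k - 1) = triangular k - k := by
  linarith [sub_add_cancel k 1 ▸ triangular_add_one (k - 1)]

lemma one_sub_pow_succ_ne_zero (hq : ¬IsOfFinOrder q) (n : ℕ) : 1 - q ^ (n + 1) ≠ 0 :=
  sub_ne_zero.2 fun h => hq (isOfFinOrder_iff_pow_eq_one.2 ⟨n + 1, n.succ_pos, h.symm⟩)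

lemma qPochhammer_succ (n : ℕ) : qPochhammer q (n + 1) = qPochhammer q n * (1 - q ^ (n + 1)) :=
  prod_range_succ _ n

lemma qPochhammerInv_natCast (n : ℕ) : qPochhammerInv q n = (qPochhammer q n)⁻¹ := by
  simp [qPochhammerInv]

lemma qPochhammerInv_of_neg {j : ℤ} (hj : j < 0) : qPochhammerInv q j = 0 :=
  if_neg hj.not_ge

lemma qPochhammerInv_sub_one (hq : ¬IsOfFinOrder q) (j : ℤ) :
    qPochhammerInv q (j - 1) = (1 - q ^ j) * qPochhammerInv q j := by
  rcases lt_trichotomy j 0 with hj | rfl | hj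
  · rw [qPochhammerInv_of_neg (by omega), qPochhammerInv_of_neg hj, mul_zero]
  · rw [qPochhammerInv_of_neg (by omega), zpow_zero, sub_self, zero_mul]
  · obtain ⟨n, rfl⟩ : ∃ n : ℕ, j = n + 1 := ⟨(j - 1).toNat, by omega⟩
    rw [add_sub_cancel_right, ← Nat.cast_add_one, qPochhammerInv_natCast, qPochhammerInv_natCast,
      qPochhammer_succ, zpow_natCast, mul_inv, mul_left_comm,
      mul_inv_cancel₀ (one_sub_pow_succ_ne_zero hq n), mul_one]

lemma tripleProductCoeff_eq (N : ℕ) (k : ℤ) : tripleProductCoeff q N k =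
    qPochhammer q (2 * N) * qPochhammerInv q (N + k) * qPochhammerInv q (N - k) *
      q ^ triangular k := by
  rw [tripleProductCoeff, qBinomial]
  congr 3
  push_cast
  ring

lemma tripleProductCoeff_succ (hq : ¬IsOfFinOrder q) (hq0 : q ≠ 0) (N : ℕ) (k : ℤ) :
    tripleProductCoeff q (N + 1) k = (1 + q ^ (2 * N + 1)) * tripleProductCoeff q N k +
      q ^ (N + 1) * tripleProductCoeff q N (k - 1) + q ^ N * tripleProductCoeff q N (k + 1) := by
  have hR : ∀ j : ℤ, qPochhammerInv q j = (1 - q ^ (j + 1)) * qPochhammerInv q (j + 1) := by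
    intro j
    simpa using qPochhammerInv_sub_one hq (j + 1)
  -- Rewrite every `qPochhammerInv` through its values at `N + k + 1` and `N - k + 1`; what is
  -- left is a polynomial identity in `q`, `q ^ N` and `q ^ k`.
  simp only [tripleProductCoeff_eq]
  rw [show 2 * (N + 1) = 2 * N + 1 + 1 by ring, qPochhammer_succ, qPochhammer_succ,
    show ((N + 1 : ℕ) : ℤ) + k = N + k + 1 by push_cast; ring,
    show ((N + 1 : ℕ) : ℤ) - k = N - k + 1 by push_cast; ring,
    show (N : ℤ) + (k - 1) = N + k - 1 by ring, show (N : ℤ) - (k + 1) = N - k - 1 by ring,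
    show (N : ℤ) - (k - 1) = N - k + 1 by ring, show (N : ℤ) + (k + 1) = N + k + 1 by ring,
    qPochhammerInv_sub_one hq, qPochhammerInv_sub_one hq, hR (N + k), hR (N - k),
    triangular_sub_one, triangular_add_one]
  simp only [zpow_add₀ hq0, zpow_sub₀ hq0, zpow_natCast, zpow_one]
  field_simp
  ring

theorem hasSum_tripleProductCoeff_mul_zpow [TopologicalSpace K] [IsTopologicalRing K]
    (hq : ¬IsOfFinOrder q) (hq0 : q ≠ 0) (hz : z ≠ 0) (N : ℕ) :
    HasSum (fun k : ℤ => tripleProductCoeff q N k * z ^ k)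
      (∏ j ∈ range N, (1 + z * q ^ (j + 1)) * (1 + z⁻¹ * q ^ j)) := by
  induction N with
  | zero =>
    have hvanish : ∀ k ≠ 0, tripleProductCoeff q 0 k * z ^ k = 0 := by
      intro k hk
      rcases hk.lt_or_gt with hk | hk
      · simp [tripleProductCoeff_eq, qPochhammerInv_of_neg hk]
      · simp [tripleProductCoeff_eq, qPochhammerInv_of_neg (neg_neg_of_pos hk)]
    convert hasSum_single 0 hvanish
    simp [tripleProductCoeff_eq, qPochhammerInv, qPochhammer, triangular]
  | succ N ih =>
    set P := ∏ j ∈ range N, (1 + z * q ^ (j + 1)) * (1 + z⁻¹ * q ^ j)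
    have hP : P * ((1 + z * q ^ (N + 1)) * (1 + z⁻¹ * q ^ N)) =
        (1 + q ^ (2 * N + 1)) * P + q ^ (N + 1) * z * P + q ^ N * z⁻¹ * P := by
      field_simp
      ring
    have ih_sub := (Equiv.subRight (1 : ℤ)).hasSum_iff.2 ih
    have ih_add := (Equiv.addRight (1 : ℤ)).hasSum_iff.2 ih
    rw [prod_range_succ, hP]
    refine (((ih.mul_left _).add (ih_sub.mul_left _)).add (ih_add.mul_left _)).congr_fun
      fun k => ?_
    simp only [Function.comp_apply, Equiv.subRight_apply, Equiv.coe_addRight,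
      tripleProductCoeff_succ hq hq0, zpow_sub₀ hz, zpow_add₀ hz, zpow_one]
    field_simp

end Algebra

section Analysis

variable {q z : ℂ}

lemma exists_forall_norm_le_of_tendsto {E : Type*} [SeminormedAddCommGroup E] {u : ℕ → E} {x : E}
    (hu : Tendsto u atTop (𝓝 x)) : ∃ C, ∀ n, ‖u n‖ ≤ C := by
  obtain ⟨C, hC⟩ := isBounded_iff_forall_norm_le.1 (Metric.isBounded_range_of_tendsto u hu)
  exact ⟨C, fun n => hC _ ⟨n, rfl⟩⟩

lemma not_isOfFinOrder_of_norm_lt_one (hq : ‖q‖ < 1) : ¬IsOfFinOrder q :=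
  fun h => hq.ne h.norm_eq_one

lemma tendsto_qPochhammer (hq : ‖q‖ < 1) :
    Tendsto (qPochhammer q) atTop (𝓝 (∏' n : ℕ, (1 - q ^ (n + 1)))) :=
  (ModularForm.multipliable_one_sub_pow hq).hasProd.tendsto_prod_nat

lemma tprod_one_sub_pow_succ_ne_zero (hq : ‖q‖ < 1) : ∏' n : ℕ, (1 - q ^ (n + 1)) ≠ 0 := by
  simp_rw [sub_eq_add_neg]
  refine tprod_one_add_ne_zero_of_summable (fun n => ?_) ?_
  · rw [← sub_eq_add_neg]
    exact one_sub_pow_succ_ne_zero (not_isOfFinOrder_of_norm_lt_one hq) n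
  · simpa using (summable_nat_add_iff 1).2 (summable_geometric_of_lt_one (norm_nonneg q) hq)

lemma tendsto_qPochhammerInv (hq : ‖q‖ < 1) :
    Tendsto (qPochhammerInv q) atTop (𝓝 (∏' n : ℕ, (1 - q ^ (n + 1)))⁻¹) := by
  have htoNat : Tendsto Int.toNat atTop atTop :=
    tendsto_atTop_atTop.2 fun n => ⟨n, fun j hj => by omega⟩
  refine (((tendsto_qPochhammer hq).inv₀ (tprod_one_sub_pow_succ_ne_zero hq)).comp htoNat).congr' ?_
  filter_upwards [eventually_ge_atTop 0] with j hj
  simp [qPochhammerInv, hj]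

lemma exists_forall_norm_qPochhammer_mul_qBinomial_le (hq : ‖q‖ < 1) :
    ∃ B, ∀ (N n : ℕ) (m : ℤ), ‖qPochhammer q N * qBinomial q n m‖ ≤ B := by
  obtain ⟨C, hC⟩ := exists_forall_norm_le_of_tendsto (tendsto_qPochhammer hq)
  obtain ⟨C', hC'⟩ := exists_forall_norm_le_of_tendsto
    ((tendsto_qPochhammer hq).inv₀ (tprod_one_sub_pow_succ_ne_zero hq))
  have hC₀ : 0 ≤ C := (norm_nonneg _).trans (hC 0)
  have hC'₀ : 0 ≤ C' := (norm_nonneg _).trans (hC' 0)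
  have hR : ∀ j, ‖qPochhammerInv q j‖ ≤ C' := by
    intro j
    unfold qPochhammerInv
    split_ifs
    exacts [hC' _, by simpa using hC'₀]
  refine ⟨C * (C * C' * C'), fun N n m => ?_⟩
  simp only [qBinomial, norm_mul]
  gcongr
  exacts [hC N, hC n, hR m, hR _]

lemma tendsto_qPochhammer_mul_qBinomial (hq : ‖q‖ < 1) (k : ℤ) :
    Tendsto (fun N : ℕ => qPochhammer q N * qBinomial q (2 * N) (N + k)) atTop (𝓝 1) := by
  have hL := tprod_one_sub_pow_succ_ne_zero hq
  have hD := tendsto_qPochhammer hq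
  have hR := tendsto_qPochhammerInv hq
  have h2N : Tendsto (fun N : ℕ => 2 * N) atTop atTop :=
    tendsto_id.const_mul_atTop' two_pos
  have hplus : Tendsto (fun N : ℕ => (N : ℤ) + k) atTop atTop :=
    tendsto_atTop_add_const_right _ _ tendsto_natCast_atTop_atTop
  have hminus : Tendsto (fun N : ℕ => ((2 * N : ℕ) : ℤ) - (N + k)) atTop atTop := by
    refine (tendsto_atTop_add_const_right _ (-k) tendsto_natCast_atTop_atTop).congr fun N => ?_
    push_cast
    ring
  convert hD.mul (((hD.comp h2N).mul (hR.comp hplus)).mul (hR.comp hminus)) using 2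
  · simp only [qBinomial, Function.comp_apply]
  · field_simp

lemma summable_norm_pow_triangular_mul_zpow (hq : ‖q‖ < 1) (hq0 : q ≠ 0) (hz : z ≠ 0) :
    Summable fun k : ℤ => ‖q ^ triangular k * z ^ k‖ := by
  -- These are the terms of `jacobiTheta₂ (τ / 2 + w) τ` for `q = e^{2πiτ}`, `z = e^{2πiw}`.
  set τ := -I * log q / (2 * π)
  have hτ : 0 < τ.im := by
    have : τ.im = -Real.log ‖q‖ / (2 * π) := by
      simp [τ, Complex.div_im, Complex.log_re]
      field_simp
    rw [this]
    exact div_pos (neg_pos.2 (Real.log_neg (norm_pos_iff.2 hq0) hq)) (by positivity)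
  refine (summable_norm_iff.2 ((summable_jacobiTheta₂_term_iff
    (τ / 2 - I * log z / (2 * π)) τ).2 hτ)).congr fun k => ?_
  have h2T : (2 : ℂ) * triangular k = k ^ 2 + k := by
    exact_mod_cast (two_mul_triangular k).trans (by ring)
  congr 1
  conv_rhs => rw [← exp_log hq0, ← exp_log hz]
  rw [jacobiTheta₂_term, ← exp_int_mul, ← exp_int_mul, ← exp_add]
  congr 1
  simp only [τ]
  field_simp
  linear_combination (k * (-log q - 2 * log z - k * log q)) * I_sq - log q * h2T

lemma summable_mul_pow_succ (hq : ‖q‖ < 1) (a : ℂ) : Summable fun n : ℕ => a * q ^ (n + 1) :=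
  ((summable_nat_add_iff 1 (f := fun n => q ^ n)).2
    (summable_geometric_of_norm_lt_one hq)).mul_left a

lemma tendsto_qPochhammer_mul_prod (hq : ‖q‖ < 1) :
    Tendsto (fun N => qPochhammer q N * ∏ j ∈ range N, (1 + z * q ^ (j + 1)) * (1 + z⁻¹ * q ^ j))
      atTop (𝓝 ((1 + z⁻¹) *
        ∏' n : ℕ, ((1 - q ^ (n + 1)) * (1 + z * q ^ (n + 1)) * (1 + z⁻¹ * q ^ (n + 1))))) := by
  have h₁ := ModularForm.multipliable_one_sub_pow hq
  have h₂ := Complex.multipliable_one_add_of_summable (summable_mul_pow_succ hq z)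
  have h₃ := Complex.multipliable_one_add_of_summable (summable_mul_pow_succ hq z⁻¹)
  have h₃' := Complex.multipliable_one_add_of_summable
    ((summable_geometric_of_norm_lt_one hq).mul_left z⁻¹)
  have hlim := ((tendsto_qPochhammer hq).mul h₂.hasProd.tendsto_prod_nat).mul
    h₃'.hasProd.tendsto_prod_nat
  rw [tprod_eq_zero_mul' (f := fun n => 1 + z⁻¹ * q ^ n) h₃, pow_zero, mul_one] at hlim
  rw [(h₁.mul h₂).tprod_mul h₃, h₁.tprod_mul h₂]
  convert hlim using 1
  · simp only [prod_mul_distrib, mul_assoc]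
  · congr 1
    ring

theorem tsum_pow_triangular_mul_zpow (hq : ‖q‖ < 1) (hq0 : q ≠ 0) (hz : z ≠ 0) :
    ∑' k : ℤ, q ^ triangular k * z ^ k = (1 + z⁻¹) *
      ∏' n : ℕ, ((1 - q ^ (n + 1)) * (1 + z * q ^ (n + 1)) * (1 + z⁻¹ * q ^ (n + 1))) := by
  have hfin := not_isOfFinOrder_of_norm_lt_one hq
  obtain ⟨B, hB⟩ := exists_forall_norm_qPochhammer_mul_qBinomial_le hq
  have hfinite (N : ℕ) : ∑' k : ℤ, qPochhammer q N * qBinomial q (2 * N) (N + k) *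
      (q ^ triangular k * z ^ k) =
        qPochhammer q N * ∏ j ∈ range N, (1 + z * q ^ (j + 1)) * (1 + z⁻¹ * q ^ j) := by
    rw [← ((hasSum_tripleProductCoeff_mul_zpow hfin hq0 hz N).mul_left _).tsum_eq]
    simp only [tripleProductCoeff, mul_assoc]
  have htannery := tendsto_tsum_of_dominated_convergence
    (f := fun N k => qPochhammer q N * qBinomial q (2 * N) (N + k) * (q ^ triangular k * z ^ k))
    ((summable_norm_pow_triangular_mul_zpow hq hq0 hz).mul_left B)
    (fun k => by
      simpa using (tendsto_qPochhammer_mul_qBinomial hq k).mul_const (q ^ triangular k * z ^ k))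
    (.of_forall fun N k => by rw [norm_mul]; gcongr; exact hB _ _ _)
  simp only [hfinite] at htannery
  exact tendsto_nhds_unique htannery (tendsto_qPochhammer_mul_prod hq)

end Analysis

lemma cexp_half_integer_term_eq (τ σ : ℂ) (k : ℤ) :
    cexp (π * I * ((k : ℂ) + 1 / 2) ^ 2 * τ + 2 * π * I * ((k : ℂ) + 1 / 2) * σ) =
      cexp (π * I * τ / 4) * cexp (π * I * σ) *
        (cexp (2 * π * I * τ) ^ triangular k * cexp (2 * π * I * σ) ^ k) := by
  have h2T : (2 : ℂ) * triangular k = k ^ 2 + k := by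
    exact_mod_cast (two_mul_triangular k).trans (by ring)
  rw [← exp_int_mul, ← exp_int_mul, ← exp_add, ← exp_add, ← exp_add]
  congr 1
  linear_combination (-(π * I * τ)) * h2T

/-- Jacobi triple product, half-integer case: with `q = e^{2πiτ}`, `Im τ > 0`,
`z = e^{2πiσ}` (so `z^{1/2} = e^{πiσ}`):
`∑_{m∈ℤ+1/2} q^{m²/2} z^m
  = (z^{1/2} + z^{-1/2}) q^{1/8} ∏_{m>0} (1-qᵐ)(1+z qᵐ)(1+z⁻¹ qᵐ)`. -/
theorem jacobi_triple_product_half (τ σ : ℂ) (hτ : 0 < τ.im) :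
    (∑' k : ℤ, Complex.exp ((Real.pi : ℂ) * Complex.I * ((k : ℂ) + 1/2) ^ 2 * τ +
        2 * (Real.pi : ℂ) * Complex.I * ((k : ℂ) + 1/2) * σ)) =
      (Complex.exp ((Real.pi : ℂ) * Complex.I * σ) +
          Complex.exp (-((Real.pi : ℂ) * Complex.I * σ))) *
        Complex.exp (2 * (Real.pi : ℂ) * Complex.I * τ / 8) *
        ∏' m : ℕ,
          ((1 - Complex.exp (2 * (Real.pi : ℂ) * Complex.I * τ) ^ (m + 1)) *
            (1 + Complex.exp (2 * (Real.pi : ℂ) * Complex.I * σ) *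
              Complex.exp (2 * (Real.pi : ℂ) * Complex.I * τ) ^ (m + 1)) *
            (1 + (Complex.exp (2 * (Real.pi : ℂ) * Complex.I * σ))⁻¹ *
              Complex.exp (2 * (Real.pi : ℂ) * Complex.I * τ) ^ (m + 1))) := by
  have hq : ‖cexp (2 * π * I * τ)‖ < 1 := UpperHalfPlane.norm_exp_two_pi_I_lt_one ⟨τ, hτ⟩
  have hprefactor : cexp (π * I * τ / 4) * cexp (π * I * σ) * (1 + (cexp (2 * π * I * σ))⁻¹) =
      (cexp (π * I * σ) + cexp (-(π * I * σ))) * cexp (2 * π * I * τ / 8) := by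
    rw [← exp_neg, mul_add, add_mul, mul_one, ← exp_add, ← exp_add, ← exp_add, ← exp_add]
    congr 1 <;> congr 1 <;> ring
  rw [tsum_congr (cexp_half_integer_term_eq τ σ), tsum_mul_left,
    tsum_pow_triangular_mul_zpow hq (exp_ne_zero _) (exp_ne_zero _), ← mul_assoc,
    hprefactor]
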